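/- Let $n \geq 2$, let $t \geq 1/n$, and let $p = (p_1,\dots,p_n)$ be a probability vector with $0 < p_i \leq t$ for all $i$. Then $\sum_{i=1}^n \log p_i \leq -n \log n - \frac{1}{2t^2}\sum_{i=1}^n \Big(p_i - \frac{1}{n}\Big)^2$. -/

import Mathlib

/-! Rescaling by `n` reduces the bound to the one-variable estimate
`log y ≤ (y - 1) - (y - 1)² / (2c)` for `0 < y ≤ c`, `1 ≤ c`, applied to `y = n pᵢ` and
`c = (n t)²`; the linear terms `n (pᵢ - 1/n)` sum to zero because `p` is a probability vector.
The one-variable estimate holds because the difference of its two sides has derivative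
`(y - 1)(c - y)/(c y)`, so on `(0, c]` it is minimal at `y = 1`, where it vanishes. -/

open Real Finset Set

namespace Real

lemma hasDerivAt_sub_one_sub_sq_div_sub_log {c x : ℝ} (hc : c ≠ 0) (hx : 0 < x) :
    HasDerivAt (fun y ↦ y - 1 - (y - 1) ^ 2 / (2 * c) - log y)
      ((x - 1) * (c - x) / (c * x)) x := by
  have h₁ := (hasDerivAt_id x).sub_const 1
  refine ((h₁.sub ((h₁.pow 2).div_const (2 * c))).sub (hasDerivAt_log hx.ne')).congr_deriv ?_
  field_simp
  simp only [id]
  ring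

lemma log_le_sub_one_sub_sq_div {c y : ℝ} (hc : 1 ≤ c) (hy : 0 < y) (hyc : y ≤ c) :
    log y ≤ y - 1 - (y - 1) ^ 2 / (2 * c) := by
  set g : ℝ → ℝ := fun y ↦ y - 1 - (y - 1) ^ 2 / (2 * c) - log y
  set g' : ℝ → ℝ := fun x ↦ (x - 1) * (c - x) / (c * x)
  have hc₀ : 0 < c := zero_lt_one.trans_le hc
  have hg : ∀ x, 0 < x → HasDerivAt g (g' x) x :=
    fun x hx ↦ hasDerivAt_sub_one_sub_sq_div_sub_log hc₀.ne' hx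
  have hcont : ∀ a, 0 < a → ∀ b, ContinuousOn g (Icc a b) :=
    fun a ha b x hx ↦ (hg x (ha.trans_le hx.1)).continuousAt.continuousWithinAt
  suffices g 1 ≤ g y by norm_num [g] at this; linarith
  rcases le_total y 1 with hy1 | hy1
  · refine antitoneOn_of_hasDerivWithinAt_nonpos (f' := g') (convex_Icc y 1) (hcont y hy 1)
      (fun x hx ↦ ?_) (fun x hx ↦ ?_) ⟨le_rfl, hy1⟩ ⟨hy1, le_rfl⟩ hy1
    all_goals rw [interior_Icc] at hx
    · exact (hg x (hy.trans hx.1)).hasDerivWithinAt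
    · exact div_nonpos_of_nonpos_of_nonneg
        (mul_nonpos_of_nonpos_of_nonneg (by linarith [hx.2]) (by linarith [hx.2]))
        (mul_pos hc₀ (hy.trans hx.1)).le
  · refine monotoneOn_of_hasDerivWithinAt_nonneg (f' := g') (convex_Icc 1 y) (hcont 1 one_pos y)
      (fun x hx ↦ ?_) (fun x hx ↦ ?_) ⟨le_rfl, hy1⟩ ⟨hy1, le_rfl⟩ hy1
    all_goals rw [interior_Icc] at hx
    · exact (hg x (one_pos.trans hx.1)).hasDerivWithinAt
    · exact div_nonneg (mul_nonneg (by linarith [hx.1]) (by linarith [hx.2]))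
        (mul_pos hc₀ (one_pos.trans hx.1)).le

end Real

lemma log_le_tangent_sub_sq_of_le {N t x : ℝ} (hN : 0 < N) (hNt : 1 ≤ N * t) (hx : 0 < x)
    (hxt : x ≤ t) :
    log x ≤ -log N + N * (x - 1 / N) - 1 / (2 * t ^ 2) * (x - 1 / N) ^ 2 := by
  have hNx : N * x ≤ (N * t) ^ 2 :=
    (mul_le_mul_of_nonneg_left hxt hN.le).trans (le_self_pow₀ hNt two_ne_zero)
  have h := log_le_sub_one_sub_sq_div (one_le_pow₀ hNt) (mul_pos hN hx) hNx
  rw [log_mul hN.ne' hx.ne'] at h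
  have ht : t ≠ 0 := by rintro rfl; norm_num at hNt
  convert (by linarith : log x ≤ -log N + (N * x - 1 - (N * x - 1) ^ 2 / (2 * (N * t) ^ 2)))
    using 1
  field_simp
  ring

theorem sum_log_le_of_entries_le_general {n : ℕ} (t : ℝ) (ht : 1 / (n : ℝ) ≤ t)
    (p : Fin n → ℝ) (hp0 : ∀ i, 0 < p i) (hpt : ∀ i, p i ≤ t) (hp1 : ∑ i, p i = 1) :
    ∑ i, Real.log (p i)
      ≤ -((n : ℝ) * Real.log n) - (1 / (2 * t ^ 2)) * ∑ i, (p i - 1 / (n : ℝ)) ^ 2 := by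
  have hn₀ : (0 : ℝ) < n := by
    obtain ⟨i, -⟩ := nonempty_of_sum_ne_zero (hp1.trans_ne one_ne_zero)
    exact Nat.cast_pos.2 i.pos
  have hnt : 1 ≤ (n : ℝ) * t := by rwa [div_le_iff₀' hn₀] at ht
  have hcentered : ∑ i, (p i - 1 / (n : ℝ)) = 0 := by
    simp [Finset.sum_sub_distrib, hp1, hn₀.ne']
  calc ∑ i, log (p i)
      ≤ ∑ i, (-log n + n * (p i - 1 / n) - 1 / (2 * t ^ 2) * (p i - 1 / n) ^ 2) :=
        sum_le_sum fun i _ ↦ log_le_tangent_sub_sq_of_le hn₀ hnt (hp0 i) (hpt i)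
    _ = _ := by
        simp only [Finset.sum_sub_distrib, Finset.sum_add_distrib, ← Finset.mul_sum, hcentered,
          sum_const, card_univ, Fintype.card_fin, nsmul_eq_mul]
        ring

/-- For a probability vector `p` on `n ≥ 2` points with `0 < pᵢ ≤ t` and `t ≥ 1/n`,
`∑ log pᵢ ≤ -n log n - (1/(2t²)) ∑ (pᵢ - 1/n)²`. -/
theorem sum_log_le_of_entries_le {n : ℕ} (hn : 2 ≤ n) (t : ℝ) (ht : 1 / (n : ℝ) ≤ t)
    (p : Fin n → ℝ) (hp0 : ∀ i, 0 < p i) (hpt : ∀ i, p i ≤ t) (hp1 : ∑ i, p i = 1) :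
    ∑ i, Real.log (p i)
      ≤ -((n : ℝ) * Real.log n) - (1 / (2 * t ^ 2)) * ∑ i, (p i - 1 / (n : ℝ)) ^ 2 :=
  sum_log_le_of_entries_le_general t ht p hp0 hpt hp1
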